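/- Let P(X) = Σ_{k=0}^d X^k a_k be a quaternionic polynomial with |P(x)| ≤ M for all |x| = 1. Then for every x ∈ ℍ with |x| = 1, writing x₀ = Re(x), one has |Σ_{k=0}^{d-1} (U_k(x₀) − x̄ U_{k-1}(x₀)) (k+1) a_{k+1}| ≤ d·M, where U_k are the Chebyshev polynomials of the second kind (U_{-1} := 0). -/

import Mathlib

/-!
On the unit sphere `x̄ x = 1` and `x + x̄ = 2 Re x`, so multiplication by `x` follows the
three-term recurrence of the `U_k` and `x ^ k = U_k(x₀) - x̄ U_{k-1}(x₀)`; the sum to be bounded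
is thus `P'(x)`, and `x P'(x) = ∑ k x ^ k a_k`.

A unit quaternion `x` lies in a slice `ℝ + ℝ u` with `u² = -1`, `‖u‖ = 1`, a copy of `ℂ` acting
isometrically on `ℍ` by left multiplication. This makes `ℍ` a complex normed space, and the claim
becomes Bernstein's inequality `‖z P'(z)‖ ≤ d sup_{|w| = 1} ‖P(w)‖` for polynomials with
coefficients in a complex normed space. The latter follows from the discrete Fejér identity: for
`N = 2d + 1` and `ζ = e^{2πi/N}`,
`N z P'(z) = ∑_{j < N} ζ^{-jd} |1 + ζ^j + ⋯ + ζ^{j(d-1)}|² P(z ζ^j)`,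
whose weights have total mass `N d`.
-/

open Finset ComplexConjugate Polynomial.Chebyshev

theorem IsPrimitiveRoot.sum_range_pow_pow {R : Type*} [CommRing R] [IsDomain R] {ζ : R} {N : ℕ}
    (hζ : IsPrimitiveRoot ζ N) (m : ℕ) :
    ∑ j ∈ range N, (ζ ^ j) ^ m = if N ∣ m then (N : R) else 0 := by
  simp_rw [← pow_mul, mul_comm _ m, pow_mul]
  split_ifs with h
  · simp [(hζ.pow_eq_one_iff_dvd m).2 h]
  · have hne : ζ ^ m - 1 ≠ 0 := sub_ne_zero.2 fun h1 => h ((hζ.pow_eq_one_iff_dvd m).1 h1)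
    have hN : (ζ ^ m) ^ N = 1 := by rw [← pow_mul, mul_comm, pow_mul, hζ.pow_eq_one, one_pow]
    have hgeom := mul_geom_sum (ζ ^ m) N
    rw [hN, sub_self] at hgeom
    exact (mul_eq_zero.1 hgeom).resolve_left hne

theorem card_filter_add_eq_add {d k : ℕ} (hk : k ≤ d) :
    #{pq ∈ range d ×ˢ range d | pq.1 + k = d + pq.2} = k := by
  calc
    _ = #(Ico (d - k) d) := card_nbij' Prod.fst (fun p => (p, p + k - d)) ?_ ?_ ?_ ?_
    _ = k := by simp; omega
  all_goals intro pq hpq; simp [Prod.ext_iff] at hpq ⊢ <;> omega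

theorem Complex.pow_sub_eq_mul_conj_pow {w : ℂ} (hw : ‖w‖ = 1) {n q : ℕ} (hq : q ≤ n) :
    w ^ (n - q) = w ^ n * conj w ^ q := by
  have h : w * conj w = 1 := by rw [Complex.mul_conj', hw]; simp
  rw [← Nat.sub_add_cancel hq, pow_add, Nat.add_sub_cancel, mul_assoc, ← mul_pow, h, one_pow,
    mul_one]

theorem Complex.sum_sum_pow_add_sub {w : ℂ} (hw : ‖w‖ = 1) {d m : ℕ} (hm : d ≤ m) :
    ∑ p ∈ range d, ∑ q ∈ range d, w ^ (p + m - q) =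
      w ^ m * ((‖∑ p ∈ range d, w ^ p‖ ^ 2 : ℝ) : ℂ) := by
  rw [Complex.ofReal_pow, ← Complex.mul_conj', map_sum, sum_mul_sum, mul_sum]
  refine sum_congr rfl fun p _ => ?_
  rw [mul_sum]
  refine sum_congr rfl fun q hq => ?_
  rw [pow_sub_eq_mul_conj_pow hw (by simp at hq; omega), map_pow, pow_add]
  ring

theorem IsPrimitiveRoot.sum_range_sum_sum_pow {R : Type*} [CommRing R] [IsDomain R] {ζ : R}
    {d : ℕ} (hζ : IsPrimitiveRoot ζ (2 * d + 1)) {k : ℕ} (hk : k ≤ d) :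
    ∑ j ∈ range (2 * d + 1), ∑ p ∈ range d, ∑ q ∈ range d, (ζ ^ j) ^ (p + (k + d + 1) - q) =
      (2 * d + 1 : ℕ) * k := by
  calc
    _ = ∑ pq ∈ range d ×ˢ range d,
          if pq.1 + k = d + pq.2 then ((2 * d + 1 : ℕ) : R) else 0 := by
      rw [sum_product, sum_comm]
      refine sum_congr rfl fun p hp => ?_
      rw [sum_comm]
      refine sum_congr rfl fun q hq => ?_
      simp only [mem_range] at hp hq
      rw [hζ.sum_range_pow_pow]
      congr 1
      refine propext ⟨fun h => ?_, fun h => ⟨1, by omega⟩⟩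
      have := Nat.eq_of_dvd_of_lt_two_mul (by omega) h (by omega)
      omega
    _ = _ := by
      rw [← sum_filter, sum_const, card_filter_add_eq_add hk, nsmul_eq_mul, mul_comm]

section FejerKernel

variable {d : ℕ} {ζ : ℂ}

theorem IsPrimitiveRoot.sum_range_norm_geom_sum_sq (hζ : IsPrimitiveRoot ζ (2 * d + 1)) :
    ∑ j ∈ range (2 * d + 1), ‖∑ p ∈ range d, (ζ ^ j) ^ p‖ ^ 2 = (2 * d + 1 : ℕ) * d := by
  have h := hζ.sum_range_sum_sum_pow (le_refl d)
  have hN : ∀ j, (ζ ^ j) ^ (d + d + 1) = 1 := fun j => by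
    rw [← pow_mul, mul_comm, pow_mul, show d + d + 1 = 2 * d + 1 by omega, hζ.pow_eq_one,
      one_pow]
  have hw : ∀ j, ‖ζ ^ j‖ = 1 := fun j => by rw [norm_pow, hζ.norm'_eq_one (by omega), one_pow]
  simp_rw [Complex.sum_sum_pow_add_sub (hw _) (by omega : d ≤ d + d + 1), hN, one_mul] at h
  exact_mod_cast h

/-- The weight `(ζ ^ j) ^ (d + 1)` is `ζ ^ (-j * d)`, written with a natural exponent. -/
theorem IsPrimitiveRoot.sum_range_fejer_smul {E : Type*} [AddCommGroup E] [Module ℂ E]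
    (hζ : IsPrimitiveRoot ζ (2 * d + 1)) (a : ℕ → E) (z : ℂ) :
    ∑ j ∈ range (2 * d + 1), ((ζ ^ j) ^ (d + 1) * (‖∑ p ∈ range d, (ζ ^ j) ^ p‖ ^ 2 : ℝ)) •
        ∑ k ∈ range (d + 1), (z * ζ ^ j) ^ k • a k =
      ((2 * d + 1 : ℕ) : ℂ) • ∑ k ∈ range (d + 1), ((k : ℂ) * z ^ k) • a k := by
  have hw : ∀ j, ‖ζ ^ j‖ = 1 := fun j => by rw [norm_pow, hζ.norm'_eq_one (by omega), one_pow]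
  simp_rw [smul_sum, smul_smul]
  rw [sum_comm]
  simp_rw [← sum_smul]
  refine sum_congr rfl fun k hk => congrArg (· • a k) ?_
  calc
    _ = z ^ k * ∑ j ∈ range (2 * d + 1), ∑ p ∈ range d, ∑ q ∈ range d,
          (ζ ^ j) ^ (p + (k + d + 1) - q) := by
      rw [mul_sum]
      refine sum_congr rfl fun j _ => ?_
      rw [Complex.sum_sum_pow_add_sub (hw j) (by omega)]
      ring
    _ = _ := by
      rw [hζ.sum_range_sum_sum_pow (by simpa [Nat.lt_succ_iff] using hk)]
      ring

end FejerKernel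

theorem Complex.bernstein_inequality {E : Type*} [SeminormedAddCommGroup E] [NormedSpace ℂ E]
    {d : ℕ} {a : ℕ → E} {M : ℝ}
    (hM : ∀ w : ℂ, ‖w‖ = 1 → ‖∑ k ∈ range (d + 1), w ^ k • a k‖ ≤ M) {z : ℂ} (hz : ‖z‖ = 1) :
    ‖∑ k ∈ range (d + 1), ((k : ℂ) * z ^ k) • a k‖ ≤ d * M := by
  set N := 2 * d + 1
  have hζ := Complex.isPrimitiveRoot_exp N (by omega)
  set ζ := Complex.exp (2 * Real.pi * Complex.I / N)
  have hw : ∀ j, ‖ζ ^ j‖ = 1 := fun j => by rw [norm_pow, hζ.norm'_eq_one (by omega), one_pow]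
  have hbound : ‖(N : ℂ) • ∑ k ∈ range (d + 1), ((k : ℂ) * z ^ k) • a k‖ ≤ N * (d * M) := by
    rw [← hζ.sum_range_fejer_smul]
    calc
      _ ≤ ∑ j ∈ range N, ‖∑ p ∈ range d, (ζ ^ j) ^ p‖ ^ 2 * M := by
        refine (norm_sum_le _ _).trans (sum_le_sum fun j _ => ?_)
        rw [norm_smul, norm_mul, norm_pow, hw, one_pow, one_mul, Complex.norm_real,
          Real.norm_of_nonneg (by positivity)]
        exact mul_le_mul_of_nonneg_left (hM _ (by rw [norm_mul, hz, hw, one_mul]))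
          (by positivity)
      _ = N * (d * M) := by rw [← sum_mul, hζ.sum_range_norm_geom_sum_sq, mul_assoc]
  rw [norm_smul, Complex.norm_natCast] at hbound
  exact le_of_mul_le_mul_left hbound (by positivity)

theorem Quaternion.pow_eq_chebyshevU {x : Quaternion ℝ} (hx : ‖x‖ = 1) (k : ℕ) :
    x ^ k = (((U ℝ (k : ℤ)).eval x.re : ℝ) : Quaternion ℝ) -
      star x * (((U ℝ ((k : ℤ) - 1)).eval x.re : ℝ) : Quaternion ℝ) := by
  induction k with
  | zero => simp
  | succ n ih =>
    set A : Quaternion ℝ := (((U ℝ (n : ℤ)).eval x.re : ℝ) : Quaternion ℝ)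
    set B : Quaternion ℝ := (((U ℝ ((n : ℤ) - 1)).eval x.re : ℝ) : Quaternion ℝ)
    have hxx : star x * x = 1 := by
      rw [Quaternion.star_mul_self, Quaternion.normSq_eq_norm_mul_self, hx, mul_one,
        Quaternion.coe_one]
    have hxA : x * A = 2 * (x.re : Quaternion ℝ) * A - star x * A := by
      rw [← Quaternion.self_add_star]; noncomm_ring
    have hU : (((U ℝ ((n + 1 : ℕ) : ℤ)).eval x.re : ℝ) : Quaternion ℝ) =
        2 * (x.re : Quaternion ℝ) * A - B := by
      rw [Nat.cast_succ, U_add_one]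
      simp only [Polynomial.eval_sub, Polynomial.eval_mul, Polynomial.eval_X,
        Polynomial.eval_ofNat, A, B]
      push_cast; rfl
    have hAx : A * x = x * A := Quaternion.coe_commutes _ x
    have hBx : B * x = x * B := Quaternion.coe_commutes _ x
    calc x ^ (n + 1) = (A - star x * B) * x := by rw [pow_succ, ih]
      _ = x * A - star x * x * B := by rw [sub_mul, mul_assoc, hBx, hAx, ← mul_assoc]
      _ = _ := by rw [hxx, one_mul, hxA, hU, Nat.cast_succ, add_sub_cancel_right]; abel

theorem mul_sum_range_pow_mul_succ {R : Type*} [Semiring R] (x : R) (a : ℕ → R) (d : ℕ) :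
    x * ∑ k ∈ range d, x ^ k * (((k + 1 : ℕ) : R) * a (k + 1)) =
      ∑ k ∈ range (d + 1), (k : R) * x ^ k * a k := by
  rw [mul_sum, sum_range_succ']
  simp only [Nat.cast_zero, zero_mul, add_zero]
  refine sum_congr rfl fun k _ => ?_
  rw [← mul_assoc, ← pow_succ', ← mul_assoc, (Nat.cast_commute (k + 1) _).eq]

theorem Quaternion.exists_im_eq_norm_smul (x : Quaternion ℝ) :
    ∃ u : Quaternion ℝ, u.re = 0 ∧ ‖u‖ = 1 ∧ x.im = ‖x.im‖ • u := by
  by_cases h : x.im = 0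
  · refine ⟨(Complex.I : Quaternion ℝ), by simp, ?_, by simp [h]⟩
    refine (pow_eq_one_iff_of_nonneg (norm_nonneg _) two_ne_zero).1 ?_
    rw [sq, ← Quaternion.normSq_eq_norm_mul_self]
    simp [Quaternion.normSq_def']
  · exact ⟨‖x.im‖⁻¹ • x.im, by simp, norm_smul_inv_norm h, by
      rw [smul_smul, mul_inv_cancel₀ (norm_ne_zero_iff.2 h), one_smul]⟩

theorem Quaternion.exists_isometric_complex_algHom (x : Quaternion ℝ) :
    ∃ φ : ℂ →ₐ[ℝ] Quaternion ℝ, (∀ z, ‖φ z‖ = ‖z‖) ∧ ∃ z, φ z = x := by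
  obtain ⟨u, hu, hu1, hxu⟩ := x.exists_im_eq_norm_smul
  have hu1' : Quaternion.normSq u = 1 := by rw [Quaternion.normSq_eq_norm_mul_self, hu1, mul_one]
  have huu : u * u = -1 := by
    rw [← sq, Quaternion.sq_eq_neg_normSq.2 hu, hu1', Quaternion.coe_one]
  refine ⟨Complex.liftAux u huu, fun z => ?_, ⟨x.re, ‖x.im‖⟩, ?_⟩
  · have h : Quaternion.normSq (Complex.liftAux u huu z) = Complex.normSq z := by
      rw [Quaternion.normSq_def'] at hu1' ⊢
      simp [Complex.liftAux_apply, Complex.normSq_apply, hu] at hu1' ⊢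
      linear_combination z.im ^ 2 * hu1'
    rw [Quaternion.normSq_eq_norm_mul_self, Complex.normSq_eq_norm_sq, sq] at h
    exact mul_self_inj (norm_nonneg _) (norm_nonneg _) |>.1 h
  · rw [Complex.liftAux_apply, ← hxu]
    exact x.re_add_im

theorem Quaternion.bernstein_inequality {d : ℕ} {a : ℕ → Quaternion ℝ} {M : ℝ}
    (hM : ∀ y : Quaternion ℝ, ‖y‖ = 1 → ‖∑ k ∈ range (d + 1), y ^ k * a k‖ ≤ M)
    {x : Quaternion ℝ} (hx : ‖x‖ = 1) :
    ‖∑ k ∈ range (d + 1), (k : Quaternion ℝ) * x ^ k * a k‖ ≤ d * M := by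
  obtain ⟨φ, hφ, z, rfl⟩ := x.exists_isometric_complex_algHom
  let _ : NormedSpace ℂ (Quaternion ℝ) :=
    { Module.compHom (Quaternion ℝ) φ.toRingHom with
      norm_smul_le := fun c q => (norm_mul (φ c) q).trans_le (by rw [hφ]) }
  have hsmul : ∀ (c : ℂ) (q : Quaternion ℝ), c • q = φ c * q := fun _ _ => rfl
  have h := Complex.bernstein_inequality (a := a) (fun w hw => by
    simpa only [hsmul, map_pow] using hM (φ w) (by rw [hφ, hw])) (by rwa [hφ] at hx)
  simpa only [hsmul, map_mul, map_pow, map_natCast] using h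

/-- **Bernstein inequality via Chebyshev polynomials of the second kind.**
If `P(X) = Σ_{k=0}^d X^k a_k` satisfies `‖P(x)‖ ≤ M` on the unit sphere of `ℍ`, then for
all `x` with `‖x‖ = 1`, writing `x₀ = Re x`,
`‖Σ_{k=0}^{d-1} (U_k(x₀) − x̄ U_{k-1}(x₀)) (k+1) a_{k+1}‖ ≤ d·M`
(where `U_{-1} = 0`). -/
theorem bernstein_chebyshev (d : ℕ) (a : ℕ → Quaternion ℝ) (M : ℝ)
    (hM : ∀ x : Quaternion ℝ, ‖x‖ = 1 →
      ‖∑ k ∈ Finset.range (d + 1), x ^ k * a k‖ ≤ M) :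
    ∀ x : Quaternion ℝ, ‖x‖ = 1 →
      ‖∑ k ∈ Finset.range d,
          ((((Polynomial.Chebyshev.U ℝ (k : ℤ)).eval x.re : ℝ) : Quaternion ℝ) -
            star x * (((Polynomial.Chebyshev.U ℝ ((k : ℤ) - 1)).eval x.re : ℝ) : Quaternion ℝ)) *
          (((k + 1 : ℕ) : Quaternion ℝ) * a (k + 1))‖ ≤ d * M := by
  intro x hx
  simp_rw [← Quaternion.pow_eq_chebyshevU hx]
  calc _ = ‖x * ∑ k ∈ range d, x ^ k * (((k + 1 : ℕ) : Quaternion ℝ) * a (k + 1))‖ := by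
        rw [norm_mul, hx, one_mul]
    _ ≤ d * M := by
        rw [mul_sum_range_pow_mul_succ]
        exact Quaternion.bernstein_inequality hM hx
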